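/- Let d ≥ 1 and let U = [U₁ U₂] and V = [V₁ V₂] be real orthogonal d×d matrices, partitioned columnwise so that U₂ consists of the last d−k columns of U and V₂ of the last d−k̄ columns of V (0 ≤ k, k̄ ≤ d). Let η ≥ 0 satisfy ‖V₁ᵀ U₂‖₂ ≤ η, and let z ∈ ℝᵈ with ‖z‖₂ ≤ 1. Then max{0, √(1 − η²) · ‖U₂ᵀ z‖₂ − η} ≤ ‖V₂ᵀ z‖₂, where √(1 − η²) is interpreted as 0 when η ≥ 1. -/

import Mathlib

/-!
Write `w = U₂ᵀ z`. Since `U₂` has orthonormal columns, `‖w‖² = ⟪z, U₂ w⟫`, and since the columns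
of `V` form an orthonormal basis this inner product splits as
`⟪V₁ᵀ z, V₁ᵀ U₂ w⟫ + ⟪V₂ᵀ z, V₂ᵀ U₂ w⟫ ≤ η ‖w‖ + ‖V₂ᵀ z‖ ‖w‖`.
Dividing by `‖w‖` gives `‖U₂ᵀ z‖ ≤ η + ‖V₂ᵀ z‖`, and `√(1 - η²) ≤ 1` finishes the proof.
-/

open Matrix

/-- The spectral norm (ℓ₂→ℓ₂ operator norm, i.e. largest singular value) of a real matrix. -/
noncomputable def specNorm {m n : Type*} [Fintype m] [Fintype n] [DecidableEq n]
    (A : Matrix m n ℝ) : ℝ :=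
  ‖LinearMap.toContinuousLinearMap (Matrix.toEuclideanLin A)‖

/-- The Euclidean norm of a vector in `ℝᵈ`. -/
noncomputable def evNorm {n : Type*} [Fintype n] (v : n → ℝ) : ℝ :=
  Real.sqrt (∑ i, v i ^ 2)

section Blocks

variable {R m n₁ n₂ : Type*} [CommRing R] [Fintype m] [DecidableEq n₁] [DecidableEq n₂]
  {A₁ : Matrix m n₁ R} {A₂ : Matrix m n₂ R}

theorem transpose_mul_self_eq_one_of_fromCols_right
    (h : (fromCols A₁ A₂)ᵀ * fromCols A₁ A₂ = 1) : A₂ᵀ * A₂ = 1 := by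
  rw [transpose_fromCols, fromRows_mul_fromCols, ← fromBlocks_one] at h
  exact (fromBlocks_inj.mp h).2.2.2

theorem mul_transpose_add_mul_transpose_eq_one_of_fromCols [Fintype n₁] [Fintype n₂]
    [DecidableEq m] (e : m ≃ n₁ ⊕ n₂) (h : (fromCols A₁ A₂)ᵀ * fromCols A₁ A₂ = 1) :
    A₁ * A₁ᵀ + A₂ * A₂ᵀ = 1 := by
  rw [transpose_fromCols] at h
  rw [← fromCols_mul_fromRows]
  exact (fromCols_mul_fromRows_eq_one_comm e A₁ A₂ A₁ᵀ A₂ᵀ).mpr h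

end Blocks

section EuclideanNorm

variable {m n : Type*} [Fintype m] [Fintype n]

theorem evNorm_nonneg (v : n → ℝ) : 0 ≤ evNorm v :=
  Real.sqrt_nonneg _

theorem evNorm_sq (v : n → ℝ) : evNorm v ^ 2 = v ⬝ᵥ v := by
  rw [evNorm, Real.sq_sqrt (Finset.sum_nonneg fun _ _ => sq_nonneg _)]
  simp only [dotProduct, sq]

theorem dotProduct_le_evNorm_mul (v w : n → ℝ) : v ⬝ᵥ w ≤ evNorm v * evNorm w :=
  calc v ⬝ᵥ w ≤ |∑ i, v i * w i| := le_abs_self _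
    _ = Real.sqrt ((∑ i, v i * w i) ^ 2) := (Real.sqrt_sq_eq_abs _).symm
    _ ≤ Real.sqrt ((∑ i, v i ^ 2) * ∑ i, w i ^ 2) :=
        Real.sqrt_le_sqrt (Finset.sum_mul_sq_le_sq_mul_sq _ v w)
    _ = evNorm v * evNorm w :=
        Real.sqrt_mul (Finset.sum_nonneg fun _ _ => sq_nonneg _) _

theorem evNorm_eq_norm_toLp (v : n → ℝ) : evNorm v = ‖WithLp.toLp 2 v‖ := by
  simp [evNorm, EuclideanSpace.norm_eq, sq_abs]

theorem evNorm_mulVec_le_specNorm_mul [DecidableEq n] (A : Matrix m n ℝ) (x : n → ℝ) :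
    evNorm (A *ᵥ x) ≤ specNorm A * evNorm x := by
  rw [evNorm_eq_norm_toLp, evNorm_eq_norm_toLp]
  exact (LinearMap.toContinuousLinearMap (toEuclideanLin A)).le_opNorm (WithLp.toLp 2 x)

theorem transpose_mulVec_dotProduct {R : Type*} [CommSemiring R] (A : Matrix m n R) (x : m → R)
    (w : n → R) : (Aᵀ *ᵥ x) ⬝ᵥ w = x ⬝ᵥ (A *ᵥ w) := by
  rw [mulVec_transpose, dotProduct_mulVec]

theorem evNorm_mulVec_of_transpose_mul_self [DecidableEq n] {A : Matrix m n ℝ}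
    (hA : Aᵀ * A = 1) (x : n → ℝ) : evNorm (A *ᵥ x) = evNorm x := by
  refine (pow_left_inj₀ (evNorm_nonneg _) (evNorm_nonneg _) two_ne_zero).mp ?_
  rw [evNorm_sq, evNorm_sq, ← transpose_mulVec_dotProduct, mulVec_mulVec, hA, one_mulVec]

end EuclideanNorm

section ResolutionOfIdentity

variable {m n₁ n₂ : Type*} [Fintype m] [DecidableEq m] [Fintype n₁] [Fintype n₂]
  {V₁ : Matrix m n₁ ℝ} {V₂ : Matrix m n₂ ℝ}

theorem dotProduct_eq_of_mul_transpose_add (hV : V₁ * V₁ᵀ + V₂ * V₂ᵀ = 1) (x y : m → ℝ) :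
    x ⬝ᵥ y = (V₁ᵀ *ᵥ x) ⬝ᵥ (V₁ᵀ *ᵥ y) + (V₂ᵀ *ᵥ x) ⬝ᵥ (V₂ᵀ *ᵥ y) := by
  rw [transpose_mulVec_dotProduct, transpose_mulVec_dotProduct, mulVec_mulVec, mulVec_mulVec,
    ← dotProduct_add, ← add_mulVec, hV, one_mulVec]

theorem evNorm_transpose_mulVec_le_of_mul_transpose_add (hV : V₁ * V₁ᵀ + V₂ * V₂ᵀ = 1)
    (x : m → ℝ) : evNorm (V₁ᵀ *ᵥ x) ≤ evNorm x := by
  refine (pow_le_pow_iff_left₀ (evNorm_nonneg _) (evNorm_nonneg _) two_ne_zero).mp ?_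
  have h := dotProduct_eq_of_mul_transpose_add hV x x
  rw [← evNorm_sq, ← evNorm_sq, ← evNorm_sq] at h
  nlinarith [sq_nonneg (evNorm (V₂ᵀ *ᵥ x))]

theorem evNorm_transpose_mulVec_le_specNorm_add {n : Type*} [Fintype n] [DecidableEq n]
    {U₂ : Matrix m n ℝ} (hU : U₂ᵀ * U₂ = 1) (hV : V₁ * V₁ᵀ + V₂ * V₂ᵀ = 1) {z : m → ℝ}
    (hz : evNorm z ≤ 1) :
    evNorm (U₂ᵀ *ᵥ z) ≤ specNorm (V₁ᵀ * U₂) + evNorm (V₂ᵀ *ᵥ z) := by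
  set w := U₂ᵀ *ᵥ z
  have hsq : evNorm w ^ 2 = (V₁ᵀ *ᵥ z) ⬝ᵥ (V₁ᵀ *ᵥ (U₂ *ᵥ w))
      + (V₂ᵀ *ᵥ z) ⬝ᵥ (V₂ᵀ *ᵥ (U₂ *ᵥ w)) := by
    rw [← dotProduct_eq_of_mul_transpose_add hV, evNorm_sq]
    exact transpose_mulVec_dotProduct U₂ z w
  have hV₁ : (V₁ᵀ *ᵥ z) ⬝ᵥ (V₁ᵀ *ᵥ (U₂ *ᵥ w)) ≤ 1 * (specNorm (V₁ᵀ * U₂) * evNorm w) := by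
    refine (dotProduct_le_evNorm_mul _ _).trans (mul_le_mul ?_ ?_ (evNorm_nonneg _) zero_le_one)
    · exact (evNorm_transpose_mulVec_le_of_mul_transpose_add hV z).trans hz
    · rw [mulVec_mulVec]
      exact evNorm_mulVec_le_specNorm_mul _ _
  have hV₂ : (V₂ᵀ *ᵥ z) ⬝ᵥ (V₂ᵀ *ᵥ (U₂ *ᵥ w)) ≤ evNorm (V₂ᵀ *ᵥ z) * evNorm w := by
    refine (dotProduct_le_evNorm_mul _ _).trans (mul_le_mul_of_nonneg_left ?_ (evNorm_nonneg _))
    rw [← evNorm_mulVec_of_transpose_mul_self hU w]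
    exact evNorm_transpose_mulVec_le_of_mul_transpose_add ((add_comm _ _).trans hV) _
  have hspec : 0 ≤ specNorm (V₁ᵀ * U₂) := norm_nonneg _
  nlinarith [evNorm_nonneg w, evNorm_nonneg (V₂ᵀ *ᵥ z)]

end ResolutionOfIdentity

theorem stmt_12_general {d k kbar : ℕ} (hkbar : kbar ≤ d)
    (U₁ : Matrix (Fin d) (Fin k) ℝ) (U₂ : Matrix (Fin d) (Fin (d - k)) ℝ)
    (hU : (Matrix.fromCols U₁ U₂)ᵀ * Matrix.fromCols U₁ U₂ = 1)
    (V₁ : Matrix (Fin d) (Fin kbar) ℝ) (V₂ : Matrix (Fin d) (Fin (d - kbar)) ℝ)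
    (hV : (Matrix.fromCols V₁ V₂)ᵀ * Matrix.fromCols V₁ V₂ = 1)
    (η : ℝ) (halign : specNorm (V₁ᵀ * U₂) ≤ η)
    (z : Fin d → ℝ) (hz : evNorm z ≤ 1) :
    max 0 (Real.sqrt (1 - η ^ 2) * evNorm (U₂ᵀ *ᵥ z) - η) ≤ evNorm (V₂ᵀ *ᵥ z) := by
  have e : Fin d ≃ Fin kbar ⊕ Fin (d - kbar) :=
    (finCongr (by omega)).trans finSumFinEquiv.symm
  have hU₂ := transpose_mul_self_eq_one_of_fromCols_right hU
  have hVVt := mul_transpose_add_mul_transpose_eq_one_of_fromCols e hV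
  have hbound := evNorm_transpose_mulVec_le_specNorm_add hU₂ hVVt hz
  have hsqrt : Real.sqrt (1 - η ^ 2) ≤ 1 := Real.sqrt_le_one.mpr (by nlinarith)
  have hscale : Real.sqrt (1 - η ^ 2) * evNorm (U₂ᵀ *ᵥ z) ≤ evNorm (U₂ᵀ *ᵥ z) :=
    mul_le_of_le_one_left (evNorm_nonneg _) hsqrt
  exact max_le (evNorm_nonneg _) (by linarith)

/-- deterministic content of Lemma 3 / Lemma Uz of the paper.
Let `U = [U₁ U₂]` and `V = [V₁ V₂]` be real orthogonal `d × d` matrices partitioned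
columnwise (`U₂` the last `d − k` columns, `V₂` the last `d − k̄` columns), let `η ≥ 0`
satisfy `‖V₁ᵀ U₂‖₂ ≤ η`, and let `z ∈ ℝᵈ` with `‖z‖₂ ≤ 1`. Then
`max {0, √(1 − η²) ‖U₂ᵀ z‖₂ − η} ≤ ‖V₂ᵀ z‖₂`
(`Real.sqrt` of a negative number is `0`, matching the convention for `η ≥ 1`). -/
theorem stmt_12 {d k kbar : ℕ} (hd : 1 ≤ d) (hk : k ≤ d) (hkbar : kbar ≤ d)
    (U₁ : Matrix (Fin d) (Fin k) ℝ) (U₂ : Matrix (Fin d) (Fin (d - k)) ℝ)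
    (hU : (Matrix.fromCols U₁ U₂)ᵀ * Matrix.fromCols U₁ U₂ = 1)
    (V₁ : Matrix (Fin d) (Fin kbar) ℝ) (V₂ : Matrix (Fin d) (Fin (d - kbar)) ℝ)
    (hV : (Matrix.fromCols V₁ V₂)ᵀ * Matrix.fromCols V₁ V₂ = 1)
    (η : ℝ) (hη : 0 ≤ η) (halign : specNorm (V₁ᵀ * U₂) ≤ η)
    (z : Fin d → ℝ) (hz : evNorm z ≤ 1) :
    max 0 (Real.sqrt (1 - η ^ 2) * evNorm (U₂ᵀ *ᵥ z) - η) ≤ evNorm (V₂ᵀ *ᵥ z) :=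
  stmt_12_general hkbar U₁ U₂ hU V₁ V₂ hV η halign z hz
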